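/- Let G be a group generated by a finite symmetric set S, let K ∈ ℕ, α > 0, 0 ≤ ε₁ < 1, let H ⊆ G be a nonempty finite set with |B_K(H)| < (1+α)|H| (H is of type (K,α)), let B ⊆ G be a nonempty finite set, and let I ⊆ G be a finite set such that H·x ⊆ B for every x ∈ I and the family (H·x)_{x∈I} is ε₁-disjoint. Then: (i) |I|·|H| ≤ (1−ε₁)⁻¹|B|; (ii) |⋃_{x∈I} (B_K(H)·x \ H·x)| ≤ α(1−ε₁)⁻¹|B|; (iii) setting B₁ := B \ ⋃_{x∈I} H·x, the set {y ∈ B₁ : B_K·y ⊆ B₁} has cardinality at least |Ω_K(B)| − (|B| − |B₁|) − α(1−ε₁)⁻¹|B|. -/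

import Mathlib

open Pointwise Filter Topology

section Defs

variable {G : Type*} [Group G]

/-- The word ball of radius `k` with respect to the generating set `S`. -/
noncomputable def wball (S : Finset G) (k : ℕ) : Finset G :=
  letI := Classical.decEq G
  (insert (1 : G) S) ^ k

/-- The `k`-neighborhood `B_k(F) = B_k * F` of a finite set `F`. -/
noncomputable def wnbhd (S : Finset G) (k : ℕ) (F : Finset G) : Finset G :=
  letI := Classical.decEq G
  wball S k * F

/-- The `k`-interior `Ω_k(F)` of a finite set `F`. -/
noncomputable def winter (S : Finset G) (k : ℕ) (F : Finset G) : Finset G :=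
  letI := Classical.decEq G
  F.filter fun p => wball S k * {p} ⊆ F

/-- The boundary `∂F` of a finite set `F`. -/
noncomputable def wbdry (S : Finset G) (F : Finset G) : Finset G :=
  letI := Classical.decEq G
  F.filter fun p => ∃ s ∈ S, s * p ∉ F

/-- `S` is a finite symmetric generating set. -/
def IsSymmGen (S : Finset G) : Prop :=
  (∀ s ∈ S, s⁻¹ ∈ S) ∧ Subgroup.closure (S : Set G) = ⊤

/-- A Følner exhaustion of `G`. -/
def IsFolnerExhaustion (S : Finset G) (F : ℕ → Finset G) : Prop :=
  (1 : G) ∈ F 0 ∧ Monotone F ∧ (∀ g : G, ∃ n, g ∈ F n) ∧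
    Filter.Tendsto (fun n => ((wbdry S (F n)).card : ℝ) / ((F n).card : ℝ))
      Filter.atTop (nhds 0)

variable {d : ℕ}

/-- The space of vectors supported in `Fs` such that `A.mulVec f` vanishes on `Fv`. -/
noncomputable def kerOn (A : Matrix (Fin d) (Fin d) (MonoidAlgebra ℂ G))
    (Fs Fv : Finset G) : Submodule ℂ (Fin d → MonoidAlgebra ℂ G) where
  carrier := {f | (∀ i, (f i).coeff.support ⊆ Fs) ∧ ∀ i, ∀ g ∈ Fv, (A.mulVec f i).coeff g = 0}
  zero_mem' := ⟨fun i => by simp, fun i g hg => by simp [Matrix.mulVec_zero]⟩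
  add_mem' := by
    classical
    rintro f g ⟨hf1, hf2⟩ ⟨hg1, hg2⟩
    constructor
    · intro i
      exact Finsupp.support_add.trans (Finset.union_subset (hf1 i) (hg1 i))
    · intro i x hx
      have h : A.mulVec (f + g) = A.mulVec f + A.mulVec g := Matrix.mulVec_add A f g
      rw [h]
      show (A.mulVec f i + A.mulVec g i).coeff x = 0
      rw [MonoidAlgebra.coeff_add, Finsupp.add_apply, hf2 i x hx, hg2 i x hx, add_zero]
  smul_mem' := by
    classical
    rintro c f ⟨hf1, hf2⟩
    constructor
    · intro i
      exact (Finsupp.support_smul).trans (hf1 i)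
    · intro i x hx
      have h : A.mulVec (c • f) = c • A.mulVec f := Matrix.mulVec_smul A c f
      rw [h]
      show (c • A.mulVec f i).coeff x = 0
      rw [MonoidAlgebra.coeff_smul_apply, hf2 i x hx, smul_zero]

/-- The space of vectors supported in `Fs` with `A.mulVec f = 0`. -/
noncomputable def kerAll (A : Matrix (Fin d) (Fin d) (MonoidAlgebra ℂ G))
    (Fs : Finset G) : Submodule ℂ (Fin d → MonoidAlgebra ℂ G) where
  carrier := {f | (∀ i, (f i).coeff.support ⊆ Fs) ∧ A.mulVec f = 0}
  zero_mem' := ⟨fun i => by simp, Matrix.mulVec_zero A⟩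
  add_mem' := by
    classical
    rintro f g ⟨hf1, hf2⟩ ⟨hg1, hg2⟩
    exact ⟨fun i => Finsupp.support_add.trans (Finset.union_subset (hf1 i) (hg1 i)),
      by rw [Matrix.mulVec_add, hf2, hg2, add_zero]⟩
  smul_mem' := by
    classical
    rintro c f ⟨hf1, hf2⟩
    exact ⟨fun i => (Finsupp.support_smul).trans (hf1 i),
      by rw [Matrix.mulVec_smul, hf2, smul_zero]⟩

/-- `V(F)`. -/
noncomputable def VSpace (A : Matrix (Fin d) (Fin d) (MonoidAlgebra ℂ G)) (F : Finset G) :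
    Submodule ℂ (Fin d → MonoidAlgebra ℂ G) :=
  kerOn A F F

/-- `Z(F)`. -/
noncomputable def ZSpace (S : Finset G) (w : ℕ) (A : Matrix (Fin d) (Fin d) (MonoidAlgebra ℂ G))
    (F : Finset G) : Submodule ℂ (Fin d → MonoidAlgebra ℂ G) :=
  kerOn A (wnbhd S w F) F

/-- `W(F)`. -/
noncomputable def WSpace (S : Finset G) (w : ℕ) (A : Matrix (Fin d) (Fin d) (MonoidAlgebra ℂ G))
    (F : Finset G) : Submodule ℂ (Fin d → MonoidAlgebra ℂ G) :=
  kerAll A (winter S w F)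

/-- `A.mulVec` as a `ℂ`-linear map. -/
noncomputable def mulVecL {R : Type*} [Ring R] [Algebra ℂ R] {d : ℕ}
    (A : Matrix (Fin d) (Fin d) R) : (Fin d → R) →ₗ[ℂ] (Fin d → R) where
  toFun := A.mulVec
  map_add' := Matrix.mulVec_add A
  map_smul' c v := Matrix.mulVec_smul A c v

/-- Coordinatewise restriction to `F` (multiplication by the indicator of `F`). -/
noncomputable def restrictTo (d : ℕ) (F : Finset G) :
    (Fin d → MonoidAlgebra ℂ G) →ₗ[ℂ] (Fin d → MonoidAlgebra ℂ G) :=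
  letI := Classical.decEq G
  { toFun := fun f i => MonoidAlgebra.ofCoeff ((f i).coeff.filter (· ∈ F))
    map_add' := fun f g => by
      funext i
      exact congrArg MonoidAlgebra.ofCoeff Finsupp.filter_add
    map_smul' := fun c f => by
      funext i
      exact congrArg MonoidAlgebra.ofCoeff Finsupp.filter_smul }

end Defs

section Tiling

variable {ι α : Type*}

/-- An `ε`-disjoint family of finite sets. -/
def EpsDisjoint (I : Finset ι) (A : ι → Finset α) (ε : ℝ) : Prop :=
  ∃ Ab : ι → Finset α, (∀ i ∈ I, Ab i ⊆ A i) ∧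
    (∀ i ∈ I, ((1 - ε) * (A i).card : ℝ) ≤ ((Ab i).card : ℝ)) ∧
    ∀ i ∈ I, ∀ j ∈ I, i ≠ j → Disjoint (Ab i) (Ab j)

/-- The family `(A i)_{i ∈ I}` `a`-covers `X`. -/
def CoversFrac (I : Finset ι) (A : ι → Finset α) (X : Finset α) (a : ℝ) : Prop :=
  letI := Classical.decEq α
  (a * X.card : ℝ) ≤ ((X ∩ I.biUnion A).card : ℝ)

/-- The family `(A i)_{i ∈ I}` `δ`-evenly covers `X`. -/
def EvenCovering (I : Finset ι) (A : ι → Finset α) (X : Finset α) (δ : ℝ) : Prop :=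
  letI := Classical.decEq α
  ∃ M : ℕ, 1 ≤ M ∧ (∀ p ∈ X, (I.filter fun i => p ∈ A i).card ≤ M) ∧
    ((1 - δ) * M * X.card : ℝ) ≤ ∑ i ∈ I, ((A i).card : ℝ)

/-- The right translate `H·x`. -/
noncomputable def rtrans [Mul α] (H : Finset α) (x : α) : Finset α :=
  letI := Classical.decEq α
  H.image (· * x)

end Tiling

section Supp

variable {G : Type*} [Group G]

/-- Vectors all of whose coordinates are supported in `F`. -/
noncomputable def suppIn (d : ℕ) (F : Finset G) :
    Submodule ℂ (Fin d → MonoidAlgebra ℂ G) where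
  carrier := {f | ∀ i, (f i).coeff.support ⊆ F}
  zero_mem' := fun i => by simp
  add_mem' := by
    classical
    intro f g hf hg i
    exact Finsupp.support_add.trans (Finset.union_subset (hf i) (hg i))
  smul_mem' := fun c f hf i => (Finsupp.support_smul).trans (hf i)

end Supp

/-!
Each tile `H·x` has an exclusive part of size at least `(1 - ε₁)|H|` inside `B`, so there are at
most `(1 - ε₁)⁻¹|B| / |H|` tiles, and as each tile gains fewer than `α|H|` points when thickened
to `B_K(H)·x`, the thickened tiles add at most `α(1 - ε₁)⁻¹|B|` points in total. A point of
`Ω_K(B)` that is left in `B₁` but loses its interior status there sees a tile within distance `K`;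
since `S` is symmetric, it then lies in the thickening of that tile.
-/

theorem EpsDisjoint.one_sub_mul_sum_card_le {ι α : Type*} {I : Finset ι} {A : ι → Finset α}
    {ε : ℝ} {B : Finset α} (hA : EpsDisjoint I A ε) (hAB : ∀ i ∈ I, A i ⊆ B) :
    (1 - ε) * ∑ i ∈ I, ((A i).card : ℝ) ≤ B.card := by
  classical
  obtain ⟨Ab, hAb_sub, hAb_card, hAb_disj⟩ := hA
  have hunion : (I.biUnion Ab).card ≤ B.card := by
    refine Finset.card_le_card fun y hy => ?_
    obtain ⟨i, hi, hyi⟩ := Finset.mem_biUnion.1 hy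
    exact hAB i hi (hAb_sub i hi hyi)
  rw [Finset.card_biUnion fun i hi j hj hij => hAb_disj i hi j hj hij] at hunion
  calc (1 - ε) * ∑ i ∈ I, ((A i).card : ℝ)
      = ∑ i ∈ I, (1 - ε) * ((A i).card : ℝ) := Finset.mul_sum _ _ _
    _ ≤ ∑ i ∈ I, ((Ab i).card : ℝ) := Finset.sum_le_sum hAb_card
    _ ≤ B.card := by exact_mod_cast hunion

section WordMetric

variable {G : Type*} [Group G]

theorem mem_rtrans {H : Finset G} {x y : G} : y ∈ rtrans H x ↔ ∃ h ∈ H, h * x = y := by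
  classical
  exact Finset.mem_image

theorem card_rtrans (H : Finset G) (x : G) : (rtrans H x).card = H.card := by
  classical
  exact Finset.card_image_of_injective _ (mul_left_injective x)

theorem rtrans_mono {H H' : Finset G} (h : H ⊆ H') (x : G) : rtrans H x ⊆ rtrans H' x := by
  classical
  exact Finset.image_subset_image h

theorem card_rtrans_sdiff_rtrans [DecidableEq G] {H H' : Finset G} (h : H ⊆ H') (x : G) :
    (rtrans H' x \ rtrans H x).card = H'.card - H.card := by
  rw [Finset.card_sdiff_of_subset (rtrans_mono h x), card_rtrans, card_rtrans]

theorem one_mem_wball (S : Finset G) (k : ℕ) : (1 : G) ∈ wball S k := by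
  classical
  exact Finset.one_mem_pow (Finset.mem_insert_self 1 S)

theorem inv_mem_wball {S : Finset G} (hS : ∀ s ∈ S, s⁻¹ ∈ S) {k : ℕ} {u : G}
    (hu : u ∈ wball S k) : u⁻¹ ∈ wball S k := by
  classical
  have hsymm : (insert (1 : G) S)⁻¹ ⊆ insert 1 S := by
    intro a ha
    rcases Finset.mem_insert.1 (Finset.mem_inv'.1 ha) with h | h
    · exact Finset.mem_insert.2 (Or.inl (inv_eq_one.1 h))
    · exact Finset.mem_insert_of_mem (inv_inv a ▸ hS _ h)
  have hu' : u⁻¹ ∈ (insert (1 : G) S)⁻¹ ^ k := by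
    rw [inv_pow]
    exact Finset.inv_mem_inv hu
  exact Finset.pow_subset_pow_left hsymm hu'

theorem mem_wnbhd {S F : Finset G} {k : ℕ} {y : G} :
    y ∈ wnbhd S k F ↔ ∃ u ∈ wball S k, ∃ f ∈ F, u * f = y := by
  classical
  exact Finset.mem_mul

theorem mem_winter {S F : Finset G} {k : ℕ} {p : G} :
    p ∈ winter S k F ↔ p ∈ F ∧ ∀ u ∈ wball S k, u * p ∈ F := by
  classical
  simp [winter, Finset.subset_iff, Finset.mem_mul]

theorem subset_wnbhd (S : Finset G) (k : ℕ) (F : Finset G) : F ⊆ wnbhd S k F :=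
  fun f hf => mem_wnbhd.2 ⟨1, one_mem_wball S k, f, hf, one_mul f⟩

theorem winter_subset_winter_sdiff_union [DecidableEq G] {S : Finset G} (hS : ∀ s ∈ S, s⁻¹ ∈ S)
    (k : ℕ) (B U : Finset G) :
    winter S k B ⊆ winter S k (B \ U) ∪ (B ∩ U) ∪ (wnbhd S k U \ U) := by
  intro y hy
  obtain ⟨hyB, hy_int⟩ := mem_winter.1 hy
  by_cases hyU : y ∈ U
  · exact Finset.mem_union_left _ (Finset.mem_union_right _ (Finset.mem_inter.2 ⟨hyB, hyU⟩))
  by_cases hfar : ∀ u ∈ wball S k, u * y ∉ U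
  · refine Finset.mem_union_left _ (Finset.mem_union_left _ (mem_winter.2 ⟨?_, fun u hu => ?_⟩))
    · exact Finset.mem_sdiff.2 ⟨hyB, hyU⟩
    · exact Finset.mem_sdiff.2 ⟨hy_int u hu, hfar u hu⟩
  push Not at hfar
  obtain ⟨u, hu, huy⟩ := hfar
  have hy_nbhd : y ∈ wnbhd S k U :=
    mem_wnbhd.2 ⟨u⁻¹, inv_mem_wball hS hu, u * y, huy, inv_mul_cancel_left u y⟩
  exact Finset.mem_union_right _ (Finset.mem_sdiff.2 ⟨hy_nbhd, hyU⟩)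

theorem card_winter_le [DecidableEq G] {S : Finset G} (hS : ∀ s ∈ S, s⁻¹ ∈ S)
    (k : ℕ) (B U : Finset G) :
    (winter S k B).card ≤ (winter S k (B \ U)).card + (B ∩ U).card + (wnbhd S k U \ U).card :=
  (Finset.card_le_card (winter_subset_winter_sdiff_union hS k B U)).trans <|
    (Finset.card_union_le _ _).trans (Nat.add_le_add_right (Finset.card_union_le _ _) _)

theorem wnbhd_biUnion_rtrans_sdiff_subset [DecidableEq G] (S : Finset G) (k : ℕ)
    (H I : Finset G) :
    wnbhd S k (I.biUnion fun x => rtrans H x) \ I.biUnion (fun x => rtrans H x) ⊆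
      I.biUnion fun x => rtrans (wnbhd S k H) x \ rtrans H x := by
  intro y hy
  obtain ⟨hy_nbhd, hy_out⟩ := Finset.mem_sdiff.1 hy
  obtain ⟨u, hu, z, hz, rfl⟩ := mem_wnbhd.1 hy_nbhd
  obtain ⟨x, hx, hzx⟩ := Finset.mem_biUnion.1 hz
  obtain ⟨h, hh, rfl⟩ := mem_rtrans.1 hzx
  have hthick : u * (h * x) ∈ rtrans (wnbhd S k H) x :=
    mem_rtrans.2 ⟨u * h, mem_wnbhd.2 ⟨u, hu, h, hh, rfl⟩, mul_assoc u h x⟩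
  exact Finset.mem_biUnion.2 ⟨x, hx, Finset.mem_sdiff.2
    ⟨hthick, fun hmem => hy_out (Finset.mem_biUnion.2 ⟨x, hx, hmem⟩)⟩⟩

end WordMetric

open scoped Classical in
theorem inductional_step_general {G : Type*} [Group G] (S : Finset G) (hS : IsSymmGen S)
    (K : ℕ) (α ε₁ : ℝ) (hα : 0 < α) (hε1 : ε₁ < 1)
    (H : Finset G) (htype : ((wnbhd S K H).card : ℝ) < (1 + α) * (H.card : ℝ))
    (B : Finset G) (I : Finset G)
    (htile : ∀ x ∈ I, rtrans H x ⊆ B)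
    (hdisj : EpsDisjoint I (fun x => rtrans H x) ε₁) :
    ((I.card : ℝ) * (H.card : ℝ) ≤ (1 - ε₁)⁻¹ * (B.card : ℝ)) ∧
    (((I.biUnion fun x => rtrans (wnbhd S K H) x \ rtrans H x).card : ℝ)
        ≤ α * (1 - ε₁)⁻¹ * (B.card : ℝ)) ∧
    (((winter S K B).card : ℝ)
        - ((B.card : ℝ) - ((B \ I.biUnion fun x => rtrans H x).card : ℝ))
        - α * (1 - ε₁)⁻¹ * (B.card : ℝ)
      ≤ ((winter S K (B \ I.biUnion fun x => rtrans H x)).card : ℝ)) := by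
  have tiles : (I.card : ℝ) * H.card ≤ (1 - ε₁)⁻¹ * B.card := by
    rw [← div_eq_inv_mul, le_div_iff₀ (sub_pos.2 hε1), mul_comm]
    simpa [card_rtrans] using hdisj.one_sub_mul_sum_card_le htile
  have thickening : ((I.biUnion fun x => rtrans (wnbhd S K H) x \ rtrans H x).card : ℝ)
      ≤ α * (1 - ε₁)⁻¹ * B.card := by
    have hH_sub := subset_wnbhd S K H
    calc _ ≤ ∑ x ∈ I, ((rtrans (wnbhd S K H) x \ rtrans H x).card : ℝ) := by
          exact_mod_cast Finset.card_biUnion_le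
      _ = I.card * (((wnbhd S K H).card : ℝ) - H.card) := by
          simp [card_rtrans_sdiff_rtrans hH_sub, Nat.cast_sub (Finset.card_le_card hH_sub), mul_sub]
      _ ≤ I.card * (α * H.card) := by gcongr; linarith
      _ ≤ α * ((1 - ε₁)⁻¹ * B.card) := by nlinarith
      _ = α * (1 - ε₁)⁻¹ * B.card := (mul_assoc _ _ _).symm
  refine ⟨tiles, thickening, ?_⟩
  have hinterior := card_winter_le hS.1 K B (I.biUnion fun x => rtrans H x)
  have hboundary := Finset.card_le_card (wnbhd_biUnion_rtrans_sdiff_subset S K H I)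
  have hsplit := Finset.card_inter_add_card_sdiff B (I.biUnion fun x => rtrans H x)
  have hreal : ((winter S K B).card : ℝ) + (B \ I.biUnion fun x => rtrans H x).card ≤
      (winter S K (B \ I.biUnion fun x => rtrans H x)).card + B.card +
        (I.biUnion fun x => rtrans (wnbhd S K H) x \ rtrans H x).card := by
    exact_mod_cast (by omega)
  linarith

open scoped Classical in
theorem inductional_step {G : Type*} [Group G] (S : Finset G) (hS : IsSymmGen S)
    (K : ℕ) (α ε₁ : ℝ) (hα : 0 < α) (hε0 : 0 ≤ ε₁) (hε1 : ε₁ < 1)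
    (H : Finset G) (hH : H.Nonempty) (htype : ((wnbhd S K H).card : ℝ) < (1 + α) * (H.card : ℝ))
    (B : Finset G) (hB : B.Nonempty) (I : Finset G)
    (htile : ∀ x ∈ I, rtrans H x ⊆ B)
    (hdisj : EpsDisjoint I (fun x => rtrans H x) ε₁) :
    ((I.card : ℝ) * (H.card : ℝ) ≤ (1 - ε₁)⁻¹ * (B.card : ℝ)) ∧
    (((I.biUnion fun x => rtrans (wnbhd S K H) x \ rtrans H x).card : ℝ)
        ≤ α * (1 - ε₁)⁻¹ * (B.card : ℝ)) ∧
    (((winter S K B).card : ℝ)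
        - ((B.card : ℝ) - ((B \ I.biUnion fun x => rtrans H x).card : ℝ))
        - α * (1 - ε₁)⁻¹ * (B.card : ℝ)
      ≤ ((winter S K (B \ I.biUnion fun x => rtrans H x)).card : ℝ)) :=
  inductional_step_general S hS K α ε₁ hα hε1 H htype B I htile hdisj
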